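/- Soares' count: if V = Z(F_1,…,F_{n−m}) ⊂ P^n is a smooth complete intersection of multidegree (d_1,…,d_{n−m}) invariant by a degree-k foliation by curves F which is non-degenerate along V, then the number of singularities of F on V, counted with multiplicity, equals N(F,V) = (d_1⋯d_{n−m}) · Σ_{j=0}^{m} [ Σ_{δ=0}^{j} (−1)^δ W_δ^{(n−m)}(d_1−1,…,d_{n−m}−1) ] k^{m−j}. Prove the purely algebraic reformulation: ∫_V c_m(T_V ⊗ O(k−1)) computed from c(T_V) = (1+h)^{n+1}/∏(1+d_i h) and ∫_V h^m = d_1⋯d_{n−m} equals the stated closed-form, i.e., the coefficient identity Σ_{i=0}^{m} τ_i^{(n−m)}(d_1,…,d_{n−m}) (k−1)^{m−i} = Σ_{j=0}^{m} [Σ_{δ=0}^{j} (−1)^δ W_δ^{(n−m)}(d_1−1,…,d_{n−m}−1)] k^{m−j}. -/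

import Mathlib

/-- Complete homogeneous (Wronski) symmetric function of degree `δ` in `q` variables. -/
def wronski {R : Type*} [CommRing R] (q δ : ℕ) (k : Fin q → R) : R :=
  ∑ a ∈ Finset.Nat.antidiagonalTuple q δ, ∏ j, k j ^ a j

/-- `τ_i^{(q)} = ∑_{j=0}^{i} (−1)^j C(n+1, i−j) W_j^{(q)}`. -/
def tauW {R : Type*} [CommRing R] (n q i : ℕ) (k : Fin q → R) : R :=
  ∑ j ∈ Finset.range (i + 1), (-1 : R) ^ j * ((n + 1).choose (i - j) : R) * wronski q j k

/-!
Both sides are an `m`-th coefficient. Since `τ_i = [h^i] (1+h)^{n+1} / ∏ (1 + d_t h)`, the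
left side is `[h^m] (1+h)^{n+1} / (∏ (1 + d_t h) · (1 - (k-1) h))`, while the right side is
`[u^m] 1 / ((1-u)(1-ku) ∏ (1 + (d_t - 1) u))`. The substitution `h = u / (1-u)` turns `1 + h`,
`1 + d h` and `1 - (k-1) h` into `1/(1-u)`, `(1 + (d-1) u)/(1-u)` and `(1 - k u)/(1-u)`, and
changes `[h^m]` into `[u^m] (1-u)^{m-1} ·`. As `n + 1 = m + (n - m) + 1`, all powers of `1 - u`
cancel and the two sides agree.
-/

namespace PowerSeries

variable {R : Type*} [CommRing R]

noncomputable def geom (c : R) : R⟦X⟧ := rescale c (mk 1)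

@[simp]
theorem coeff_geom (c : R) (n : ℕ) : coeff n (geom c) = c ^ n := by
  simp [geom, coeff_rescale]

theorem geom_mul_one_sub (c : R) : geom c * (1 - C c * X) = 1 := by
  simpa [geom, rescale_X] using congrArg (rescale c) (mk_one_mul_one_sub_eq_one R)

theorem geom_one_mul_one_sub_X : geom (1 : R) * (1 - X) = 1 := by
  simpa using geom_mul_one_sub (1 : R)

theorem coeff_mul_geom (f : R⟦X⟧) (c : R) (m : ℕ) :
    coeff m (f * geom c) = ∑ i ∈ Finset.range (m + 1), coeff i f * c ^ (m - i) := by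
  simp [coeff_mul, Finset.Nat.sum_antidiagonal_eq_sum_range_succ_mk]

/-- The substitution `X ↦ X / (1 - X)`. -/
noncomputable def moebius : R⟦X⟧ →ₐ[R] R⟦X⟧ :=
  substAlgHom (HasSubst.of_constantCoeff_zero' (a := X * geom (1 : R)) (by simp))

theorem moebius_X : moebius (X : R⟦X⟧) = X * geom 1 :=
  substAlgHom_X _

theorem moebius_C (r : R) : moebius (C r) = C r :=
  moebius.commutes r

theorem moebius_coe (p : Polynomial R) : moebius (p : R⟦X⟧) = p.aeval (X * geom 1) :=
  substAlgHom_coe _ p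

theorem moebius_one_add_X : moebius (1 + X : R⟦X⟧) = geom 1 := by
  rw [map_add, map_one, moebius_X]
  linear_combination -geom_one_mul_one_sub_X (R := R)

theorem moebius_geom (c : R) : moebius (geom c) = (1 - X) * geom (c + 1) := by
  have hinv := congrArg moebius (geom_mul_one_sub c)
  rw [map_mul, map_sub, map_one, map_mul, moebius_C, moebius_X] at hinv
  have hinv' : (1 - C c * (X * geom 1)) * ((1 - X) * geom (c + 1)) = 1 := by
    have h := geom_mul_one_sub (c + 1)
    rw [map_add, map_one] at h
    linear_combination h - C c * X * geom (c + 1) * geom_one_mul_one_sub_X (R := R)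
  linear_combination (1 - X) * geom (c + 1) * hinv - moebius (geom c) * hinv'

theorem coeff_one_sub_X_pow_mul_geom_one (p : ℕ) :
    coeff p ((1 - X : R⟦X⟧) ^ p * geom 1) = if p = 0 then 1 else 0 := by
  rcases p with _ | p
  · simp
  · have hpoly : (1 - X : R⟦X⟧) ^ p =
        ((1 - Polynomial.X : Polynomial R) ^ p : Polynomial R) := by
      push_cast; rfl
    rw [pow_succ, mul_assoc, mul_comm (1 - X), geom_one_mul_one_sub_X, mul_one, hpoly,
      Polynomial.coeff_coe, if_neg p.succ_ne_zero]
    refine Polynomial.coeff_eq_zero_of_natDegree_lt (lt_of_le_of_lt ?_ p.lt_succ_self)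
    compute_degree

theorem coeff_one_sub_X_pow_mul_geom_one_mul_pow {m i : ℕ} (hi : i ≤ m) :
    coeff m ((1 - X) ^ m * geom 1 * (X * geom (1 : R)) ^ i) = if i = m then 1 else 0 := by
  obtain ⟨p, rfl⟩ := Nat.exists_eq_add_of_le' hi
  calc coeff (p + i) ((1 - X) ^ (p + i) * geom 1 * (X * geom (1 : R)) ^ i)
      = coeff (p + i) (X ^ i * ((1 - X) ^ p * geom 1) * (geom 1 * (1 - X)) ^ i) := by
        rw [mul_pow, mul_pow, pow_add]
        congr 1
        ring
    _ = if i = p + i then 1 else 0 := by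
      rw [geom_one_mul_one_sub_X, one_pow, mul_one, coeff_X_pow_mul,
        coeff_one_sub_X_pow_mul_geom_one]
      simp

/-- The change of variables `h = u / (1 - u)` in `[h^m] F = res F(h) dh / h^{m+1}`. -/
theorem coeff_eq_coeff_moebius (m : ℕ) (F : R⟦X⟧) :
    coeff m F = coeff m ((1 - X) ^ m * geom 1 * moebius F) := by
  set G : R⟦X⟧ := mk fun i ↦ coeff (i + (m + 1)) F
  have htail : coeff m ((1 - X) ^ m * geom 1 * moebius (X ^ (m + 1) * G)) = 0 := by
    have hX : (1 - X) ^ m * geom 1 * moebius (X ^ (m + 1) * G) =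
        X ^ (m + 1) * ((1 - X) ^ m * geom 1 ^ (m + 2) * moebius G) := by
      rw [map_mul, map_pow, moebius_X]
      ring
    rw [hX, coeff_X_pow_mul', if_neg (by omega)]
  have hhead : moebius (trunc (m + 1) F : R⟦X⟧) =
      ∑ i ∈ Finset.range (m + 1), C (coeff i F) * (X * geom 1) ^ i := by
    rw [moebius_coe, Polynomial.aeval_def, eval₂_trunc_eq_sum_range]
    rfl
  conv_rhs => rw [eq_X_pow_mul_shift_add_trunc (m + 1) F, map_add, mul_add, map_add, htail,
    zero_add, hhead, Finset.mul_sum, map_sum]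
  calc coeff m F = ∑ i ∈ Finset.range (m + 1), coeff i F * if i = m then 1 else 0 := by simp
    _ = _ := Finset.sum_congr rfl fun i hi ↦ by
      rw [mul_left_comm, coeff_C_mul,
        coeff_one_sub_X_pow_mul_geom_one_mul_pow (Finset.mem_range_succ_iff.mp hi)]

end PowerSeries

open Finset PowerSeries

section

variable {R : Type*} [CommRing R]

theorem coeff_prod_geom (q δ : ℕ) (E : Fin q → R) :
    coeff δ (∏ t, geom (E t)) = wronski q δ E := by
  rw [coeff_prod, wronski]
  refine sum_nbij' (fun l ↦ ⇑l) Finsupp.equivFunOnFinite.symm ?_ ?_ ?_ ?_ ?_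
  · intro l hl
    simpa [Nat.mem_antidiagonalTuple] using hl
  · intro a ha
    simpa [Nat.mem_antidiagonalTuple] using ha
  · intro l _
    exact Finsupp.equivFunOnFinite.symm_apply_apply l
  · intro a _
    exact Finsupp.equivFunOnFinite.apply_symm_apply a
  · intro l _
    simp

theorem wronski_neg (q δ : ℕ) (E : Fin q → R) :
    wronski q δ (fun t ↦ -E t) = (-1) ^ δ * wronski q δ E := by
  rw [wronski, wronski, mul_sum]
  refine sum_congr rfl fun a ha ↦ ?_
  rw [Nat.mem_antidiagonalTuple] at ha
  simp_rw [neg_pow (E _), prod_mul_distrib, prod_pow_eq_pow_sum, ha]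

theorem tauW_eq_coeff (n q i : ℕ) (D : Fin q → R) :
    tauW n q i D = coeff i ((∏ t, geom (-D t)) * (1 + X) ^ (n + 1)) := by
  have hbinom : ((1 + X) ^ (n + 1) : R⟦X⟧) =
      ((1 + Polynomial.X) ^ (n + 1) : Polynomial R) := by
    push_cast; rfl
  rw [tauW, coeff_mul, Nat.sum_antidiagonal_eq_sum_range_succ_mk]
  refine sum_congr rfl fun j _ ↦ ?_
  rw [coeff_prod_geom, wronski_neg, hbinom, Polynomial.coeff_coe, Polynomial.coeff_one_add_X_pow]
  ring

theorem sum_tauW_mul_sub_one_pow (m q : ℕ) (D : Fin q → R) (k : R) :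
    ∑ i ∈ range (m + 1), tauW (m + q) q i D * (k - 1) ^ (m - i) =
      ∑ j ∈ range (m + 1),
        (∑ δ ∈ range (j + 1), (-1) ^ δ * wronski q δ (fun t ↦ D t - 1)) * k ^ (m - j) := by
  have hlhs : ∑ i ∈ range (m + 1), tauW (m + q) q i D * (k - 1) ^ (m - i) =
      coeff m ((∏ t, geom (-D t)) * (1 + X) ^ (m + q + 1) * geom (k - 1)) := by
    simp only [coeff_mul_geom, tauW_eq_coeff]
  have hrhs : ∑ j ∈ range (m + 1),
        (∑ δ ∈ range (j + 1), (-1) ^ δ * wronski q δ (fun t ↦ D t - 1)) * k ^ (m - j) =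
      coeff m ((∏ t, geom (-(D t - 1))) * geom 1 * geom k) := by
    simp only [coeff_mul_geom, coeff_prod_geom, wronski_neg, one_pow, mul_one]
  have hsubst : (1 - X) ^ m * geom 1 *
      moebius ((∏ t, geom (-D t)) * (1 + X) ^ (m + q + 1) * geom (k - 1)) =
        (∏ t, geom (-(D t - 1))) * geom 1 * geom k := by
    simp only [map_mul, map_prod, map_pow, moebius_geom, moebius_one_add_X,
      prod_mul_distrib, prod_const, card_univ, Fintype.card_fin,
      neg_add_eq_sub, neg_sub, sub_add_cancel]
    calc _ = geom 1 ^ (m + q + 1) * (1 - X) ^ (m + q + 1) *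
          ((∏ t, geom (1 - D t)) * geom 1 * geom k) := by ring
      _ = _ := by rw [← mul_pow, geom_one_mul_one_sub_X, one_pow, one_mul]
  rw [hlhs, hrhs, coeff_eq_coeff_moebius, hsubst]

end

/-- Algebraic reformulation of Soares' count: for a smooth complete intersection
`V ⊂ Pⁿ` of multidegree `(d₁,…,d_{n−m})`, the coefficient identity
`∑_{i=0}^{m} τ_i^{(n−m)}(d₁,…,d_{n−m}) (k−1)^{m−i}
  = ∑_{j=0}^{m} [∑_{δ=0}^{j} (−1)^δ W_δ^{(n−m)}(d₁−1,…,d_{n−m}−1)] k^{m−j}`. -/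
theorem stmt18 {R : Type*} [CommRing R] (n m : ℕ) (hmn : m ≤ n)
    (D : Fin (n - m) → R) (k : R) :
    ∑ i ∈ Finset.range (m + 1), tauW n (n - m) i D * (k - 1) ^ (m - i) =
      ∑ j ∈ Finset.range (m + 1),
        (∑ δ ∈ Finset.range (j + 1),
          (-1 : R) ^ δ * wronski (n - m) δ (fun t => D t - 1)) * k ^ (m - j) := by
  simpa only [Nat.add_sub_cancel' hmn] using sum_tauW_mul_sub_one_pow m (n - m) D k
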